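/- Let f = Σ_{i+j≤4} a_{ij} x^i y^j ∈ ℂ[x,y] be a polynomial of total degree at most 4, defining a plane quartic X through the origin, the node of the nodal cubic E : y² − x² − x³ = 0. Suppose that X meets the branch of E tangent to the line x = y with multiplicity at least 3, i.e. dim_ℂ ℂ[[s]]/(f(s(s+2), s(s+1)(s+2))) ≥ 3, and that X meets the line x = y at the origin with multiplicity at least 3 (the condition that the origin be a flex of X with flex line x = y), i.e. dim_ℂ ℂ[[x,y]]/(f, x − y) ≥ 3. Then X is singular at the origin: f ∈ (x,y)², equivalently a₀₀ = a₁₀ = a₀₁ = 0. (Equivalently: a plane quartic that is smooth at the node of E and meets E there with intersection multiplicity at least 4 cannot have the node as a flex.) -/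

import Mathlib

/-!
Both hypotheses say that `f` vanishes to order at least `3` along a curve germ through the origin:
the first along the branch `s ↦ (s(s+2), s(s+1)(s+2))`, the second along the diagonal
`t ↦ (t, t)`. For the second, every power series is congruent modulo `x - y` to one in `y` alone,
so `ℂ[[x,y]]/(f, x - y)` is a quotient of `ℂ[[t]]/(f(t,t))`; and `dim ℂ[[t]]/(g) ≥ 3` forces
`t³ ∣ g`. Modulo `t³` only the 2-jet of `f` matters, so each curve imposes three linear conditions
on `a₀₀, a₁₀, a₀₁, a₂₀, a₁₁, a₀₂`. The tangent vectors `(2, 2)` and `(1, 1)` of the two curves are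
proportional, but their second-order terms differ, and the combined system forces
`a₀₀ = a₁₀ = a₀₁ = 0`.
-/

/-- The coefficient `a_{ij}` of `x^i y^j` in a polynomial `f ∈ ℂ[x,y]`. -/
noncomputable def coeffA (f : MvPolynomial (Fin 2) ℂ) (i j : ℕ) : ℂ :=
  MvPolynomial.coeff (Finsupp.single 0 i + Finsupp.single 1 j) f

open Finset Finsupp

namespace PowerSeries

open Polynomial

theorem rank_quotient_span_le_of_dvd_X_pow {k : Type*} [Field k] {g : k⟦X⟧} {m : ℕ}
    (hg : g ∣ X ^ m) : Module.rank k (k⟦X⟧ ⧸ Ideal.span {g}) ≤ m := by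
  let L : degreeLT k m →ₗ[k] k⟦X⟧ ⧸ Ideal.span {g} :=
    (Ideal.Quotient.mkₐ k _).toLinearMap ∘ₗ (coeToPowerSeries.algHom k).toLinearMap ∘ₗ
      (degreeLT k m).subtype
  have hL : Function.Surjective L := by
    intro y
    obtain ⟨φ, rfl⟩ := Ideal.Quotient.mk_surjective y
    refine ⟨⟨trunc m φ, mem_degreeLT.2 (degree_trunc_lt φ m)⟩, (Ideal.Quotient.eq.2 ?_).symm⟩
    exact Ideal.mem_span_singleton.2 <| hg.trans
      ⟨_, sub_eq_iff_eq_add.2 (eq_X_pow_mul_shift_add_trunc m φ)⟩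
  calc Module.rank k (k⟦X⟧ ⧸ Ideal.span {g}) ≤ Module.rank k (degreeLT k m) :=
        LinearMap.rank_le_of_surjective L hL
    _ = m := by rw [(degreeLTEquiv k m).rank_eq, rank_fin_fun]

theorem X_pow_dvd_of_le_rank_quotient {k : Type*} [Field k] {g : k⟦X⟧} {n : ℕ}
    (h : n ≤ Module.rank k (k⟦X⟧ ⧸ Ideal.span {g})) : X ^ n ∣ g := by
  by_contra hdvd
  have hg : g ≠ 0 := by rintro rfl; exact hdvd (dvd_zero _)
  have hlt : g.order.toNat < n := by
    by_contra! hle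
    exact hdvd ((pow_dvd_pow X hle).trans X_pow_order_dvd)
  obtain ⟨u, hu⟩ := isUnit_divided_by_X_pow_order hg
  have hgu : X ^ g.order.toNat * (u : k⟦X⟧) = g := hu ▸ X_pow_order_mul_divXPowOrder
  have hgX : g ∣ X ^ g.order.toNat :=
    ⟨(↑u⁻¹ : k⟦X⟧), by conv_rhs => rw [← hgu, mul_assoc, Units.mul_inv, mul_one]⟩
  exact (Nat.cast_le.1 (h.trans (rank_quotient_span_le_of_dvd_X_pow hgX))).not_gt hlt

end PowerSeries

theorem Finsupp.eq_single_zero_add_single_one {M : Type*} [AddZeroClass M] (d : Fin 2 →₀ M) :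
    d = single 0 (d 0) + single 1 (d 1) := by
  ext t; fin_cases t <;> simp

theorem Finsupp.single_zero_add_single_one_inj {M : Type*} [AddZeroClass M] {a b c d : M} :
    single (0 : Fin 2) a + single 1 b = single 0 c + single 1 d ↔ a = c ∧ b = d := by
  refine ⟨fun h ↦ ⟨?_, ?_⟩, fun ⟨hac, hbd⟩ ↦ hac ▸ hbd ▸ rfl⟩
  · simpa using DFunLike.congr_fun h 0
  · simpa using DFunLike.congr_fun h 1

namespace MvPowerSeries

variable {σ R : Type*} [CommRing R]

theorem coeff_add_single_X_mul (s : σ) (d : σ →₀ ℕ) (φ : MvPowerSeries σ R) :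
    coeff (d + single s 1) (X s * φ) = coeff d φ := by
  rw [X_def, add_comm, coeff_add_monomial_mul, one_mul]

theorem coeff_X_mul_of_eq_zero {s : σ} {d : σ →₀ ℕ} (hd : d s = 0) (φ : MvPowerSeries σ R) :
    coeff d (X s * φ) = 0 :=
  X_dvd_iff.1 (dvd_mul_right _ _) d hd

theorem exists_X_sub_X_dvd_sub_toMvPowerSeries (p : MvPowerSeries (Fin 2) R) :
    ∃ g : PowerSeries R, X 0 - X 1 ∣ p - g.toMvPowerSeries 1 := by
  -- `q` is the termwise quotient of `p(x, y) - p(y, y)` by `x - y`, using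
  -- `x^i - y^i = (x - y) ∑_{s + t = i - 1} x^s y^t`.
  let q : MvPowerSeries (Fin 2) R := fun d ↦
    ∑ x ∈ antidiagonal (d 1), coeff (single 0 (d 0 + 1 + x.1) + single 1 x.2) p
  have hq (i j : ℕ) : coeff (single 0 i + single 1 j) q =
      ∑ x ∈ antidiagonal j, coeff (single 0 (i + 1 + x.1) + single 1 x.2) p := by
    rw [coeff_apply]
    simp [q]
  set r := p - (X 0 - X 1) * q with hr
  refine ⟨PowerSeries.mk fun n ↦ coeff (single 1 n) r, q, ?_⟩
  suffices h : (PowerSeries.mk fun n ↦ coeff (single 1 n) r).toMvPowerSeries 1 = r by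
    rw [h, hr, sub_sub_cancel]
  ext d
  rw [PowerSeries.toMvPowerSeries_eq_subst, PowerSeries.coeff_subst_single]
  split_ifs with hd
  · rw [PowerSeries.coeff_mk, ← hd]
  obtain ⟨i, hi⟩ : ∃ i, d 0 = i + 1 := Nat.exists_eq_succ_of_ne_zero fun h0 ↦ hd (by
    conv_lhs => rw [eq_single_zero_add_single_one d, h0]
    simp)
  have hX0 (j : ℕ) : coeff (single 0 (i + 1) + single 1 j) (X 0 * q) =
      coeff (single 0 i + single 1 j) q := by
    rw [single_add, add_right_comm, coeff_add_single_X_mul]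
  rw [eq_single_zero_add_single_one d, hi, hr, map_sub, sub_mul, map_sub, hX0, hq]
  generalize d 1 = j
  cases j with
  | zero => simp [coeff_X_mul_of_eq_zero]
  | succ j =>
    have hX1 : coeff (single 0 (i + 1) + single 1 (j + 1)) (X 1 * q) =
        coeff (single 0 (i + 1) + single 1 j) q := by
      rw [single_add 1 j, ← add_assoc, coeff_add_single_X_mul]
    rw [hX1, hq, Nat.sum_antidiagonal_succ]
    ring_nf

theorem X_sub_X_dvd_coe_sub_toMvPowerSeries_aeval (f : MvPolynomial (Fin 2) R) :
    X 0 - X 1 ∣ (f : MvPowerSeries (Fin 2) R) -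
      (MvPolynomial.aeval ![PowerSeries.X, PowerSeries.X] f).toMvPowerSeries 1 := by
  let I := Ideal.span {(X 0 - X 1 : MvPowerSeries (Fin 2) R)}
  have hX : Ideal.Quotient.mk I (X 0) = Ideal.Quotient.mk I (X 1) :=
    Ideal.Quotient.eq.2 (Ideal.mem_span_singleton_self _)
  have hhom : (Ideal.Quotient.mkₐ R I).comp (MvPolynomial.coeToMvPowerSeries.algHom R) =
      (Ideal.Quotient.mkₐ R I).comp ((PowerSeries.toMvPowerSeries 1).comp
        (MvPolynomial.aeval ![PowerSeries.X, PowerSeries.X])) :=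
    MvPolynomial.algHom_ext fun i ↦ by fin_cases i <;> simp [hX]
  exact Ideal.mem_span_singleton.1 (Ideal.Quotient.eq.1 (DFunLike.congr_fun hhom f))

theorem rank_quotient_le_of_X_sub_X_dvd {k : Type*} [Field k] {F : MvPowerSeries (Fin 2) k}
    {g : PowerSeries k} (h : X 0 - X 1 ∣ F - g.toMvPowerSeries 1) :
    Module.rank k (MvPowerSeries (Fin 2) k ⧸ Ideal.span {F, X 0 - X 1}) ≤
      Module.rank k (PowerSeries k ⧸ Ideal.span {g}) := by
  set J := Ideal.span {F, X 0 - X 1}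
  have hF : F ∈ J := Ideal.subset_span (by simp)
  have hmk {p : MvPowerSeries (Fin 2) k} {g' : PowerSeries k}
      (hp : X 0 - X 1 ∣ p - g'.toMvPowerSeries 1) :
      Ideal.Quotient.mk J p = Ideal.Quotient.mk J (g'.toMvPowerSeries 1) := by
    obtain ⟨c, hc⟩ := hp
    exact Ideal.Quotient.eq.2 (hc ▸ J.mul_mem_right c (Ideal.subset_span (by simp)))
  let φ : PowerSeries k →ₐ[k] MvPowerSeries (Fin 2) k ⧸ J :=
    (Ideal.Quotient.mkₐ k J).comp (PowerSeries.toMvPowerSeries 1)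
  have hφg : φ g = 0 := by
    simp [φ, ← hmk h, Ideal.Quotient.eq_zero_iff_mem, hF]
  let ψ := Ideal.Quotient.liftₐ (Ideal.span {g}) φ fun a ha ↦ by
    obtain ⟨c, rfl⟩ := Ideal.mem_span_singleton'.1 ha
    rw [map_mul, hφg, mul_zero]
  have hψ : Function.Surjective ψ := by
    intro y
    obtain ⟨p, rfl⟩ := Ideal.Quotient.mk_surjective y
    obtain ⟨g', hg'⟩ := exists_X_sub_X_dvd_sub_toMvPowerSeries p
    exact ⟨Ideal.Quotient.mk _ g', (hmk hg').symm⟩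
  exact LinearMap.rank_le_of_surjective ψ.toLinearMap hψ

end MvPowerSeries

namespace MvPolynomial

theorem aeval_mem_pow_of_mem_pow_idealOfVars {σ R S : Type*} [CommRing R] [CommRing S]
    [Algebra R S] {a : σ → S} {I : Ideal S} (ha : ∀ i, a i ∈ I) {n : ℕ}
    {p : MvPolynomial σ R} (hp : p ∈ idealOfVars σ R ^ n) : aeval a p ∈ I ^ n := by
  have hmap : (idealOfVars σ R ^ n).map (aeval a) ≤ I ^ n := by
    rw [Ideal.map_pow, Ideal.map_span, ← Set.range_comp]
    exact Ideal.pow_right_mono (Ideal.span_le.2 (Set.range_subset_iff.2 (by simpa using ha))) n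
  exact hmap (Ideal.mem_map_of_mem _ hp)

end MvPolynomial

section TwoJet

open MvPolynomial

noncomputable def twoJet (f : MvPolynomial (Fin 2) ℂ) : MvPolynomial (Fin 2) ℂ :=
  monomial (single 0 0 + single 1 0) (coeffA f 0 0) +
  monomial (single 0 1 + single 1 0) (coeffA f 1 0) +
  monomial (single 0 0 + single 1 1) (coeffA f 0 1) +
  monomial (single 0 2 + single 1 0) (coeffA f 2 0) +
  monomial (single 0 1 + single 1 1) (coeffA f 1 1) +
  monomial (single 0 0 + single 1 2) (coeffA f 0 2)

theorem sub_twoJet_mem_pow_idealOfVars (f : MvPolynomial (Fin 2) ℂ) :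
    f - twoJet f ∈ idealOfVars (Fin 2) ℂ ^ 3 := by
  refine (mem_pow_idealOfVars_iff' 3 _).2 fun d hd ↦ ?_
  rw [eq_single_zero_add_single_one d] at hd ⊢
  simp only [map_add, degree_single] at hd
  simp only [twoJet, coeffA, coeff_sub, coeff_add, coeff_monomial, single_zero_add_single_one_inj]
  generalize d 0 = i at hd ⊢
  generalize d 1 = j at hd ⊢
  have hi : i < 3 := by omega
  have hj : j < 3 := by omega
  interval_cases i <;> interval_cases j <;> simp_all

end TwoJet

section CurveContact

open PowerSeries

theorem aeval_twoJet (f : MvPolynomial (Fin 2) ℂ) (u v : PowerSeries ℂ) :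
    MvPolynomial.aeval ![u, v] (twoJet f) = C (coeffA f 0 0) + C (coeffA f 1 0) * u +
      C (coeffA f 0 1) * v + C (coeffA f 2 0) * u ^ 2 + C (coeffA f 1 1) * (u * v) +
      C (coeffA f 0 2) * v ^ 2 := by
  simp [twoJet, MvPolynomial.monomial_fin_two, mul_assoc]

theorem coeffA_relations_of_X_pow_three_dvd_aeval {f : MvPolynomial (Fin 2) ℂ}
    {u v : PowerSeries ℂ} (hu : constantCoeff u = 0) (hv : constantCoeff v = 0)
    (h : X ^ 3 ∣ MvPolynomial.aeval ![u, v] f) :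
    coeffA f 0 0 = 0 ∧ coeffA f 1 0 * coeff 1 u + coeffA f 0 1 * coeff 1 v = 0 ∧
      coeffA f 1 0 * coeff 2 u + coeffA f 0 1 * coeff 2 v + coeffA f 2 0 * coeff 1 u ^ 2 +
        coeffA f 1 1 * (coeff 1 u * coeff 1 v) + coeffA f 0 2 * coeff 1 v ^ 2 = 0 := by
  have hjet : X ^ 3 ∣ MvPolynomial.aeval ![u, v] (twoJet f) := by
    have hrest := MvPolynomial.aeval_mem_pow_of_mem_pow_idealOfVars (I := Ideal.span {X})
      (a := ![u, v]) (by simp [Fin.forall_fin_two, Ideal.mem_span_singleton, X_dvd_iff, hu, hv])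
      (sub_twoJet_mem_pow_idealOfVars f)
    rw [Ideal.span_singleton_pow, Ideal.mem_span_singleton, map_sub] at hrest
    simpa using dvd_sub h hrest
  rw [X_pow_dvd_iff] at hjet
  refine ⟨?_, ?_, ?_⟩
  · simpa [aeval_twoJet, hu, hv] using hjet 0 (by norm_num)
  · simpa [aeval_twoJet, coeff_mul, Nat.sum_antidiagonal_succ, hu, hv, pow_two]
      using hjet 1 (by norm_num)
  · simpa [aeval_twoJet, coeff_mul, Nat.sum_antidiagonal_succ, hu, hv, pow_two]
      using hjet 2 (by norm_num)

theorem coeffA_relations_of_branch_contact {f : MvPolynomial (Fin 2) ℂ}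
    (h : 3 ≤ Module.rank ℂ
      (ℂ⟦X⟧ ⧸ Ideal.span {MvPolynomial.aeval ![(X * (X + 2) : ℂ⟦X⟧), X * (X + 1) * (X + 2)] f})) :
    coeffA f 0 0 = 0 ∧
      coeffA f 1 0 + 3 * coeffA f 0 1 + 4 * (coeffA f 2 0 + coeffA f 1 1 + coeffA f 0 2) = 0 := by
  have hu : (X * (X + 2) : ℂ⟦X⟧) = C 2 * X + X ^ 2 := by rw [map_ofNat]; ring
  have hv : (X * (X + 1) * (X + 2) : ℂ⟦X⟧) = C 2 * X + C 3 * X ^ 2 + X ^ 3 := by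
    simp only [map_ofNat]; ring
  rw [hu, hv] at h
  obtain ⟨h00, -, h2⟩ := coeffA_relations_of_X_pow_three_dvd_aeval (by simp) (by simp)
    (X_pow_dvd_of_le_rank_quotient (n := 3) h)
  have hu1 : coeff 1 (C 2 * X + X ^ 2 : ℂ⟦X⟧) = 2 := by simp [coeff_X_pow]
  have hu2 : coeff 2 (C 2 * X + X ^ 2 : ℂ⟦X⟧) = 1 := by simp [coeff_X_pow]
  have hv1 : coeff 1 (C 2 * X + C 3 * X ^ 2 + X ^ 3 : ℂ⟦X⟧) = 2 := by simp [coeff_X_pow]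
  have hv2 : coeff 2 (C 2 * X + C 3 * X ^ 2 + X ^ 3 : ℂ⟦X⟧) = 3 := by simp [coeff_X_pow]
  rw [hu1, hu2, hv1, hv2] at h2
  exact ⟨h00, by linear_combination h2⟩

theorem coeffA_relations_of_flex_contact {f : MvPolynomial (Fin 2) ℂ}
    (h : 3 ≤ Module.rank ℂ (MvPowerSeries (Fin 2) ℂ ⧸
      Ideal.span {(f : MvPowerSeries (Fin 2) ℂ), MvPowerSeries.X 0 - MvPowerSeries.X 1})) :
    coeffA f 1 0 + coeffA f 0 1 = 0 ∧ coeffA f 2 0 + coeffA f 1 1 + coeffA f 0 2 = 0 := by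
  have hdiag := X_pow_dvd_of_le_rank_quotient (n := 3) <| h.trans <|
    MvPowerSeries.rank_quotient_le_of_X_sub_X_dvd
      (MvPowerSeries.X_sub_X_dvd_coe_sub_toMvPowerSeries_aeval f)
  obtain ⟨-, h1, h2⟩ := coeffA_relations_of_X_pow_three_dvd_aeval (by simp) (by simp) hdiag
  have hX2 : coeff 2 (X : ℂ⟦X⟧) = 0 := by simp [coeff_X]
  rw [coeff_one_X] at h1 h2
  rw [hX2] at h2
  exact ⟨by linear_combination h1, by linear_combination h2⟩

end CurveContact

theorem quartic_with_nodal_flex_contact_is_singular_at_node_general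
    (f : MvPolynomial (Fin 2) ℂ)
    (hbranch : 3 ≤ Module.rank ℂ
      (PowerSeries ℂ ⧸ Ideal.span
        {MvPolynomial.aeval
          ![(PowerSeries.X * (PowerSeries.X + 2) : PowerSeries ℂ),
            (PowerSeries.X * (PowerSeries.X + 1) * (PowerSeries.X + 2) : PowerSeries ℂ)] f}))
    (hflex : 3 ≤ Module.rank ℂ
      (MvPowerSeries (Fin 2) ℂ ⧸
        Ideal.span {(f : MvPowerSeries (Fin 2) ℂ),
          (MvPowerSeries.X 0 : MvPowerSeries (Fin 2) ℂ) - MvPowerSeries.X 1})) :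
    coeffA f 0 0 = 0 ∧ coeffA f 1 0 = 0 ∧ coeffA f 0 1 = 0 := by
  obtain ⟨h00, hbranch⟩ := coeffA_relations_of_branch_contact hbranch
  obtain ⟨hlin, hquad⟩ := coeffA_relations_of_flex_contact hflex
  exact ⟨h00, by linear_combination (3 * hlin - hbranch + 4 * hquad) / 2,
    by linear_combination (hbranch - 4 * hquad - hlin) / 2⟩

/-- Let `f = Σ_{i+j≤4} a_{ij} x^i y^j ∈ ℂ[x,y]` have total degree at
most `4`, defining a plane quartic `X` through the origin, the node of the nodal cubic
`E : y² − x² − x³ = 0`.  If `X` meets the branch of `E` tangent to the line `x = y`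
with multiplicity at least `3`, i.e.
`dim_ℂ ℂ[[s]]/(f(s(s+2), s(s+1)(s+2))) ≥ 3`, and `X` meets the line `x = y` at the
origin with multiplicity at least `3`, i.e. `dim_ℂ ℂ[[x,y]]/(f, x − y) ≥ 3`, then `X`
is singular at the origin: `a₀₀ = a₁₀ = a₀₁ = 0` (equivalently `f ∈ (x,y)²`). -/
theorem quartic_with_nodal_flex_contact_is_singular_at_node
    (f : MvPolynomial (Fin 2) ℂ) (hdeg : f.totalDegree ≤ 4)
    (hbranch : 3 ≤ Module.rank ℂ
      (PowerSeries ℂ ⧸ Ideal.span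
        {MvPolynomial.aeval
          ![(PowerSeries.X * (PowerSeries.X + 2) : PowerSeries ℂ),
            (PowerSeries.X * (PowerSeries.X + 1) * (PowerSeries.X + 2) : PowerSeries ℂ)] f}))
    (hflex : 3 ≤ Module.rank ℂ
      (MvPowerSeries (Fin 2) ℂ ⧸
        Ideal.span {(f : MvPowerSeries (Fin 2) ℂ),
          (MvPowerSeries.X 0 : MvPowerSeries (Fin 2) ℂ) - MvPowerSeries.X 1})) :
    coeffA f 0 0 = 0 ∧ coeffA f 1 0 = 0 ∧ coeffA f 0 1 = 0 :=
  quartic_with_nodal_flex_contact_is_singular_at_node_general f hbranch hflex
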